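/- (Corollary 8, multi-tier dense-deployment bound.) Fix α > 2, an integer T ≥ 1, a tier index t ∈ {1, …, T}, and for each q ∈ {1, …, T}: P_q > 0, B_q > 0, κ_q > 0, an integer F_q ≥ 1, and SNR_q > 0. Let X_t and g_1, …, g_T be nonnegative random variables with X_t integrable and E[g_q^{2/α}] < ∞ for all q. Set M_{t,0}(z) = E[exp(-z·X_t)], M_{q,I}(z) = E[exp(-z·g_q)], and T_{q,I}(z) = z^{2/α}·E[g_q^{2/α}·γ(1 − 2/α, z·g_q)]. With w_q = (P_q·B_q/(P_t·B_t))^{-1}·SNR_q, define Z̃^{(t)}(y) = Σ_{q=1}^T (κ_q·F_t/(F_q·κ_t))·(P_q·B_q/(P_t·B_t))^{2/α}·[(F_q − 1) + M_{q,I}(w_q·y) + T_{q,I}(w_q·y)] > 0, and for λ > 0 define the tier-t average rate R̃_t(λ) = ∫₀^∞ (1 − M_{t,0}(SNR_t·y))·(G̃(y, λ)/y) dy, where G̃(y, λ) = Z̃^{(t)}(y)^{-1} − (α/2)·(y/Z̃^{(t)}(y))·∫₀^∞ ξ^{α/2−1}·exp(-π·(κ_t·λ/F_t)·Z̃^{(t)}(y)·ξ)·exp(-y·ξ^{α/2})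 dξ (all integrals valued in [0, ∞]). Then λ ↦ R̃_t(λ) is monotonically nondecreasing, R̃_t(λ) ≤ R̃_t^{(λ∞)} := ∫₀^∞ (1 − M_{t,0}(SNR_t·y))/(y·Z̃^{(t)}(y)) dy for every λ > 0, and lim_{λ→∞} R̃_t(λ) = R̃_t^{(λ∞)} (equality in [0, ∞]). -/

import Mathlib

open MeasureTheory Real Set Filter
open scoped ENNReal

/-- The lower incomplete gamma function `γ(a, x) = ∫₀^x s^{a-1} e^{-s} ds`. -/
noncomputable def lowerGamma (a x : ℝ) : ℝ :=
  ∫ s in Set.Ioc (0 : ℝ) x, s ^ (a - 1) * Real.exp (-s)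

open scoped Topology

/-! The density `λ` enters `G̃(y, λ)` only through the `ξ`-integral
`D(b, y) = ∫₀^∞ ξ^{s-1} e^{-bξ} e^{-y ξ^s} dξ` with `s = α/2` and damping rate
`b = π (κ_t λ / F_t) Z̃(y)`, which is proportional to `λ`. Since `0 ≤ D(b, y) ≤ Γ(s) b^{-s}` and
`D` is antitone in `b`, the integrand of `R̃_t(λ)` is nondecreasing in `λ`, bounded by
`(1 - M_{t,0}(SNR_t y)) / (y Z̃(y))` and converges to it pointwise; monotone convergence along
`λ = n + 1`, together with monotonicity in `λ`, gives the limit. Measurability of all integrands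
holds because `M_{t,0}`, `M_{q,I}`, `T_{q,I}` and `D` are integrals of jointly measurable
functions of the parameter and the integration variable. -/

theorem measurable_integral_of_measurable_uncurry {α β : Type*} [MeasurableSpace α]
    [MeasurableSpace β] {ν : Measure β} [SFinite ν] {f : α → β → ℝ}
    (hf : Measurable (Function.uncurry f)) : Measurable fun x => ∫ y, f x y ∂ν :=
  hf.stronglyMeasurable.integral_prod_right.measurable

theorem measurable_lowerGamma (a : ℝ) : Measurable (lowerGamma a) := by
  have hind : lowerGamma a =
      fun x => ∫ s, (Ioc 0 x).indicator (fun s => s ^ (a - 1) * exp (-s)) s :=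
    funext fun x => (integral_indicator measurableSet_Ioc).symm
  rw [hind]
  refine measurable_integral_of_measurable_uncurry
    (Measurable.ite ?_ (by fun_prop) measurable_const)
  exact (measurableSet_lt measurable_const measurable_snd).inter
    (measurableSet_le measurable_snd measurable_fst)

theorem integral_exp_neg_mul_le_one {Ω : Type*} [MeasurableSpace Ω] {μ : Measure Ω}
    [IsProbabilityMeasure μ] {X : Ω → ℝ} (hX0 : ∀ ω, 0 ≤ X ω) {z : ℝ}
    (hz : 0 ≤ z) : ∫ ω, exp (-(z * X ω)) ∂μ ≤ 1 := by
  have hle : ∀ ω, exp (-(z * X ω)) ≤ 1 := fun ω =>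
    exp_le_one_iff.2 (neg_nonpos.2 (mul_nonneg hz (hX0 ω)))
  calc ∫ ω, exp (-(z * X ω)) ∂μ ≤ ∫ _, (1 : ℝ) ∂μ :=
        integral_mono_of_nonneg (ae_of_all _ fun ω => (exp_pos _).le) (integrable_const 1)
          (ae_of_all _ hle)
    _ = 1 := by simp

noncomputable def dampedGammaIntegral (s b y : ℝ) : ℝ :=
  ∫ ξ in Ioi 0, ξ ^ (s - 1) * exp (-(b * ξ)) * exp (-(y * ξ ^ s))

section DampedGamma

variable {s b y : ℝ}

theorem integrableOn_rpow_mul_exp_neg_mul (hs : 0 < s) (hb : 0 < b) :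
    IntegrableOn (fun ξ : ℝ => ξ ^ (s - 1) * exp (-(b * ξ))) (Ioi 0) :=
  (integrableOn_rpow_mul_exp_neg_mul_rpow (p := 1) (s := s - 1) (by linarith) one_pos hb).congr_fun
    (fun ξ _ => by simp only [rpow_one, neg_mul]) measurableSet_Ioi

theorem dampedGammaIntegrand_le (hy : 0 ≤ y) {ξ : ℝ} (hξ : 0 < ξ) :
    ξ ^ (s - 1) * exp (-(b * ξ)) * exp (-(y * ξ ^ s)) ≤ ξ ^ (s - 1) * exp (-(b * ξ)) :=
  mul_le_of_le_one_right (by positivity)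
    (exp_le_one_iff.2 (neg_nonpos.2 (mul_nonneg hy (rpow_nonneg hξ.le _))))

theorem integrableOn_dampedGammaIntegrand (hs : 0 < s) (hb : 0 < b) (hy : 0 ≤ y) :
    IntegrableOn (fun ξ : ℝ => ξ ^ (s - 1) * exp (-(b * ξ)) * exp (-(y * ξ ^ s))) (Ioi 0) := by
  refine (integrableOn_rpow_mul_exp_neg_mul hs hb).mono' (by fun_prop) ?_
  filter_upwards [ae_restrict_mem measurableSet_Ioi] with ξ (hξ : 0 < ξ)
  rw [norm_of_nonneg (by positivity)]
  exact dampedGammaIntegrand_le hy hξ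

theorem dampedGammaIntegral_nonneg : 0 ≤ dampedGammaIntegral s b y :=
  setIntegral_nonneg measurableSet_Ioi fun ξ (hξ : 0 < ξ) => by positivity

theorem dampedGammaIntegral_le (hs : 0 < s) (hb : 0 < b) (hy : 0 ≤ y) :
    dampedGammaIntegral s b y ≤ (1 / b) ^ s * Gamma s := by
  rw [← integral_rpow_mul_exp_neg_mul_Ioi hs hb]
  exact setIntegral_mono_on (integrableOn_dampedGammaIntegrand hs hb hy)
    (integrableOn_rpow_mul_exp_neg_mul hs hb) measurableSet_Ioi
    fun ξ hξ => dampedGammaIntegrand_le hy hξ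

theorem antitoneOn_dampedGammaIntegral (hs : 0 < s) (hy : 0 ≤ y) :
    AntitoneOn (fun b => dampedGammaIntegral s b y) (Ioi 0) := by
  intro b₁ (hb₁ : 0 < b₁) b₂ (hb₂ : 0 < b₂) hb
  refine setIntegral_mono_on (integrableOn_dampedGammaIntegrand hs hb₂ hy)
    (integrableOn_dampedGammaIntegrand hs hb₁ hy) measurableSet_Ioi fun ξ (hξ : 0 < ξ) => ?_
  gcongr

theorem tendsto_dampedGammaIntegral_atTop (hs : 0 < s) (hy : 0 ≤ y) :
    Tendsto (fun b => dampedGammaIntegral s b y) atTop (𝓝 0) := by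
  have hbound : Tendsto (fun b : ℝ => (1 / b) ^ s * Gamma s) atTop (𝓝 0) := by
    have := (tendsto_rpow_neg_atTop hs).mul_const (Gamma s)
    rw [zero_mul] at this
    refine this.congr' ((eventually_gt_atTop 0).mono fun b (hb : 0 < b) => ?_)
    show _ = (1 / b) ^ s * Gamma s
    rw [one_div, inv_rpow hb.le, rpow_neg hb.le]
  refine tendsto_of_tendsto_of_tendsto_of_le_of_le' tendsto_const_nhds hbound
    (Eventually.of_forall fun _ => dampedGammaIntegral_nonneg) ?_
  filter_upwards [eventually_gt_atTop 0] with b hb using dampedGammaIntegral_le hs hb hy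

theorem measurable_dampedGammaIntegral (s : ℝ) :
    Measurable fun p : ℝ × ℝ => dampedGammaIntegral s p.1 p.2 :=
  measurable_integral_of_measurable_uncurry (by fun_prop)

end DampedGamma

theorem tendsto_of_monotoneOn_Ioi_of_tendsto_natCast_add_one {β : Type*} [LinearOrder β]
    [TopologicalSpace β] [OrderTopology β] {φ : ℝ → β} {L : β} (hφ : MonotoneOn φ (Ioi 0))
    (h : Tendsto (fun n : ℕ => φ (n + 1)) atTop (𝓝 L)) : Tendsto φ atTop (𝓝 L) := by
  have hpos : ∀ n : ℕ, (0 : ℝ) < n + 1 := fun n => by positivity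
  have hle : ∀ x, 0 < x → φ x ≤ L := fun x hx => by
    obtain ⟨n, hn⟩ := exists_nat_ge x
    refine ge_of_tendsto h (eventually_atTop.2 ⟨n, fun m hm => hφ hx (hpos m) ?_⟩)
    have : (n : ℝ) ≤ m := by exact_mod_cast hm
    linarith
  refine tendsto_order.2 ⟨fun a ha => ?_, fun a ha => ?_⟩
  · obtain ⟨n, hn⟩ := ((tendsto_order.1 h).1 a ha).exists
    filter_upwards [eventually_ge_atTop ((n : ℝ) + 1)] with x hx
    exact hn.trans_le (hφ (hpos n) ((hpos n).trans_le hx) hx)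
  · filter_upwards [eventually_gt_atTop 0] with x hx
    exact (hle x hx).trans_lt ha

theorem tendsto_lintegral_of_monotoneOn_Ioi {α : Type*} [MeasurableSpace α] {μ : Measure α}
    {f : ℝ → α → ℝ≥0∞} {F : α → ℝ≥0∞} (hf : ∀ r, 0 < r → AEMeasurable (f r) μ)
    (h_mono : ∀ᵐ x ∂μ, MonotoneOn (f · x) (Ioi 0))
    (h_lim : ∀ᵐ x ∂μ, Tendsto (f · x) atTop (𝓝 (F x))) :
    Tendsto (fun r => ∫⁻ x, f r x ∂μ) atTop (𝓝 (∫⁻ x, F x ∂μ)) := by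
  have hpos : ∀ n : ℕ, (0 : ℝ) < n + 1 := fun n => by positivity
  refine tendsto_of_monotoneOn_Ioi_of_tendsto_natCast_add_one
    (fun a ha b hb hab => lintegral_mono_ae (h_mono.mono fun x hx => hx ha hb hab)) ?_
  exact lintegral_tendsto_of_tendsto_of_monotone (fun n => hf _ (hpos n))
    (h_mono.mono fun x hx m n hmn => hx (hpos m) (hpos n) (by gcongr))
    (h_lim.mono fun x hx =>
      hx.comp (tendsto_atTop_add_const_right _ 1 tendsto_natCast_atTop_atTop))

noncomputable def rateIntegrand (s : ℝ) (N Z : ℝ → ℝ) (b : ℝ → ℝ → ℝ) (lam y : ℝ) : ℝ≥0∞ :=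
  ENNReal.ofReal (N y * (((Z y)⁻¹ - s * (y / Z y) * dampedGammaIntegral s (b lam y) y) / y))

section RateIntegrand

variable {s : ℝ} {N Z : ℝ → ℝ} {b : ℝ → ℝ → ℝ} {y : ℝ}

theorem rateIntegrand_le (hs : 0 ≤ s) (hy : 0 < y) (hN : 0 ≤ N y) (hZ : 0 < Z y) (lam : ℝ) :
    rateIntegrand s N Z b lam y ≤ ENNReal.ofReal (N y / (y * Z y)) := by
  have hD := dampedGammaIntegral_nonneg (s := s) (b := b lam y) (y := y)
  rw [show N y / (y * Z y) = N y * ((Z y)⁻¹ / y) by field_simp]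
  unfold rateIntegrand
  gcongr
  exact sub_le_self _ (by positivity)

theorem rateIntegrand_monotoneOn {c : ℝ} (hs : 0 < s) (hy : 0 < y) (hN : 0 ≤ N y)
    (hZ : 0 < Z y) (hc : 0 < c) (hb : ∀ lam, b lam y = c * lam) :
    MonotoneOn (rateIntegrand s N Z b · y) (Ioi 0) := by
  intro l₁ (h₁ : 0 < l₁) l₂ (h₂ : 0 < l₂) h
  dsimp only [rateIntegrand]
  gcongr ENNReal.ofReal (N y * ((_ - _ * ?_) / y))
  refine antitoneOn_dampedGammaIntegral hs hy.le ?_ ?_ ?_ <;> simp only [hb, mem_Ioi]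
  · positivity
  · positivity
  · gcongr

theorem tendsto_rateIntegrand (hs : 0 < s) (hy : 0 < y) (hZ : Z y ≠ 0)
    (hb : Tendsto (b · y) atTop atTop) :
    Tendsto (rateIntegrand s N Z b · y) atTop (𝓝 (ENNReal.ofReal (N y / (y * Z y)))) := by
  have hD := (tendsto_dampedGammaIntegral_atTop hs hy.le).comp hb
  rw [show N y / (y * Z y) = N y * (((Z y)⁻¹ - s * (y / Z y) * 0) / y) by
    rw [mul_zero, sub_zero]; field_simp]
  exact ENNReal.tendsto_ofReal
    ((((hD.const_mul (s * (y / Z y))).const_sub (Z y)⁻¹).div_const y).const_mul (N y))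

theorem measurable_rateIntegrand (hN : Measurable N) (hZ : Measurable Z) {lam : ℝ}
    (hb : Measurable (b lam)) : Measurable (rateIntegrand s N Z b lam) := by
  have hD := (measurable_dampedGammaIntegral s).comp (hb.prodMk measurable_id)
  unfold rateIntegrand
  fun_prop

end RateIntegrand

theorem averageRate_dense_limit {s : ℝ} (hs : 0 < s) {N Z c : ℝ → ℝ} {b : ℝ → ℝ → ℝ}
    (hN : Measurable N) (hZ : Measurable Z) (hc : Measurable c)
    (hN0 : ∀ y, 0 < y → 0 ≤ N y) (hZ0 : ∀ y, 0 < y → 0 < Z y) (hc0 : ∀ y, 0 < y → 0 < c y)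
    (hb : ∀ lam y, b lam y = c y * lam) :
    MonotoneOn (fun lam => ∫⁻ y in Ioi 0, rateIntegrand s N Z b lam y) (Ioi 0)
    ∧ (∀ lam, ∫⁻ y in Ioi 0, rateIntegrand s N Z b lam y
        ≤ ∫⁻ y in Ioi 0, ENNReal.ofReal (N y / (y * Z y)))
    ∧ Tendsto (fun lam => ∫⁻ y in Ioi 0, rateIntegrand s N Z b lam y) atTop
        (𝓝 (∫⁻ y in Ioi 0, ENNReal.ofReal (N y / (y * Z y)))) := by
  have h_mono : ∀ᵐ y ∂volume.restrict (Ioi 0), MonotoneOn (rateIntegrand s N Z b · y) (Ioi 0) :=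
    (ae_restrict_mem measurableSet_Ioi).mono fun y (hy : 0 < y) =>
      rateIntegrand_monotoneOn hs hy (hN0 y hy) (hZ0 y hy) (hc0 y hy) (hb · y)
  refine ⟨fun l₁ h₁ l₂ h₂ h => lintegral_mono_ae (h_mono.mono fun y hy => hy h₁ h₂ h),
    fun lam => setLIntegral_mono_ae' measurableSet_Ioi (ae_of_all _ fun y (hy : 0 < y) =>
      rateIntegrand_le hs.le hy (hN0 y hy) (hZ0 y hy) lam), ?_⟩
  refine tendsto_lintegral_of_monotoneOn_Ioi
    (fun lam _ => (measurable_rateIntegrand hN hZ ?_).aemeasurable) h_mono ?_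
  · simpa only [funext (hb lam)] using hc.mul_const lam
  · filter_upwards [ae_restrict_mem measurableSet_Ioi] with y (hy : 0 < y)
    refine tendsto_rateIntegrand hs hy (hZ0 y hy).ne' ?_
    simpa only [hb, id_eq] using tendsto_id.const_mul_atTop (hc0 y hy)

theorem multi_tier_average_rate_dense_limit_general
    {Ω : Type*} [MeasurableSpace Ω] (μ : Measure Ω) [IsProbabilityMeasure μ]
    (α : ℝ) (hα : 2 < α) (T : ℕ) (t : Fin T)
    (P B κ : Fin T → ℝ) (F : Fin T → ℕ) (SNR : Fin T → ℝ)
    (hκ : ∀ q, 0 < κ q)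
    (hF : ∀ q, 1 ≤ F q) (hSNR : ∀ q, 0 < SNR q)
    (Xt : Ω → ℝ) (g : Fin T → Ω → ℝ)
    (hXt : Measurable Xt) (hg : ∀ q, Measurable (g q))
    (hXtnn : ∀ ω, 0 ≤ Xt ω)
    (Mt0 : ℝ → ℝ) (MI TI : Fin T → ℝ → ℝ)
    (hMt0 : ∀ z, Mt0 z = ∫ ω, Real.exp (-(z * Xt ω)) ∂μ)
    (hMI : ∀ q z, MI q z = ∫ ω, Real.exp (-(z * g q ω)) ∂μ)
    (hTI : ∀ q z, TI q z =
        z ^ (2 / α) * ∫ ω, g q ω ^ (2 / α) * lowerGamma (1 - 2 / α) (z * g q ω) ∂μ)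
    (Zt : ℝ → ℝ)
    (hZt : ∀ y, Zt y = ∑ q : Fin T,
        (κ q * (F t : ℝ) / ((F q : ℝ) * κ t)) *
          (P q * B q / (P t * B t)) ^ (2 / α) *
          (((F q : ℝ) - 1) + MI q ((P q * B q / (P t * B t))⁻¹ * SNR q * y)
            + TI q ((P q * B q / (P t * B t))⁻¹ * SNR q * y)))
    (hZtpos : ∀ y, 0 < Zt y)
    (Gt : ℝ → ℝ → ℝ)
    (hGt : ∀ y lam, Gt y lam = (Zt y)⁻¹ - (α / 2) * (y / Zt y) *
        ∫ ξ in Set.Ioi (0 : ℝ),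
          ξ ^ (α / 2 - 1) * Real.exp (-(π * (κ t * lam / (F t : ℝ)) * Zt y * ξ)) *
            Real.exp (-(y * ξ ^ (α / 2))))
    (R : ℝ → ℝ≥0∞)
    (hR : ∀ lam, R lam = ∫⁻ y in Set.Ioi (0 : ℝ),
        ENNReal.ofReal ((1 - Mt0 (SNR t * y)) * (Gt y lam / y))) :
    (∀ lam₁ lam₂ : ℝ, 0 < lam₁ → lam₁ ≤ lam₂ → R lam₁ ≤ R lam₂)
    ∧ (∀ lam : ℝ, 0 < lam →
        R lam ≤ ∫⁻ y in Set.Ioi (0 : ℝ),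
          ENNReal.ofReal ((1 - Mt0 (SNR t * y)) / (y * Zt y)))
    ∧ Tendsto R atTop
        (nhds (∫⁻ y in Set.Ioi (0 : ℝ),
          ENNReal.ofReal ((1 - Mt0 (SNR t * y)) / (y * Zt y)))) := by
  have hM : Measurable Mt0 := funext hMt0 ▸ measurable_integral_of_measurable_uncurry (by fun_prop)
  have hZ : Measurable Zt := by
    have hMI' : ∀ q, Measurable (MI q) := fun q =>
      funext (hMI q) ▸ measurable_integral_of_measurable_uncurry (by fun_prop)
    have hγ := measurable_lowerGamma (1 - 2 / α)
    have hTI' : ∀ q, Measurable (TI q) := fun q => funext (hTI q) ▸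
      (measurable_id.pow_const _).mul (measurable_integral_of_measurable_uncurry (by fun_prop))
    rw [funext hZt]
    fun_prop
  have hN0 : ∀ y, 0 < y → 0 ≤ 1 - Mt0 (SNR t * y) := fun y hy =>
    sub_nonneg.2 (hMt0 _ ▸ integral_exp_neg_mul_le_one hXtnn (by have := hSNR t; positivity))
  have hc0 : ∀ y, 0 < y → 0 < π * κ t / F t * Zt y := fun y _ => by
    have := hκ t; have := hZtpos y; have : (0 : ℝ) < F t := by exact_mod_cast hF t
    positivity
  obtain rfl : R = _ := funext hR
  obtain rfl : Gt = _ := funext fun y => funext (hGt y)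
  obtain ⟨hmono, hle, hlim⟩ := averageRate_dense_limit (s := α / 2)
    (b := fun lam y => π * (κ t * lam / F t) * Zt y) (by linarith)
    (by fun_prop) hZ (by fun_prop) hN0
    (fun y _ => hZtpos y) hc0 fun lam y => by ring
  exact ⟨fun _ _ h₁ h₁₂ => hmono h₁ (h₁.trans_le h₁₂) h₁₂, fun lam _ => hle lam, hlim⟩

/-- Corollary 8 (equation (26)): in a `T`-tier network with common path-loss exponent `α`,
tier-`q` powers `P q`, biases `B q`, density coefficients `κ q`, frequency bands `F q`
with random frequency reuse and per-tier SNRs `SNR q`, the tier-`t` average rate `R̃_t(λ)`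
is nondecreasing in the common density parameter `λ`, is bounded above by
`R̃_t^{(λ∞)} = ∫₀^∞ (1 - M_{t,0}(SNR_t y))/(y Z̃^{(t)}(y)) dy`, and tends to this bound
as `λ → ∞`. -/
theorem multi_tier_average_rate_dense_limit
    {Ω : Type*} [MeasurableSpace Ω] (μ : Measure Ω) [IsProbabilityMeasure μ]
    (α : ℝ) (hα : 2 < α) (T : ℕ) (hT : 1 ≤ T) (t : Fin T)
    (P B κ : Fin T → ℝ) (F : Fin T → ℕ) (SNR : Fin T → ℝ)
    (hP : ∀ q, 0 < P q) (hB : ∀ q, 0 < B q) (hκ : ∀ q, 0 < κ q)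
    (hF : ∀ q, 1 ≤ F q) (hSNR : ∀ q, 0 < SNR q)
    (Xt : Ω → ℝ) (g : Fin T → Ω → ℝ)
    (hXt : Measurable Xt) (hg : ∀ q, Measurable (g q))
    (hXtnn : ∀ ω, 0 ≤ Xt ω) (hgnn : ∀ q ω, 0 ≤ g q ω)
    (hXtint : Integrable Xt μ) (hgint : ∀ q, Integrable (fun ω => g q ω ^ (2 / α)) μ)
    (Mt0 : ℝ → ℝ) (MI TI : Fin T → ℝ → ℝ)
    (hMt0 : ∀ z, Mt0 z = ∫ ω, Real.exp (-(z * Xt ω)) ∂μ)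
    (hMI : ∀ q z, MI q z = ∫ ω, Real.exp (-(z * g q ω)) ∂μ)
    (hTI : ∀ q z, TI q z =
        z ^ (2 / α) * ∫ ω, g q ω ^ (2 / α) * lowerGamma (1 - 2 / α) (z * g q ω) ∂μ)
    (Zt : ℝ → ℝ)
    (hZt : ∀ y, Zt y = ∑ q : Fin T,
        (κ q * (F t : ℝ) / ((F q : ℝ) * κ t)) *
          (P q * B q / (P t * B t)) ^ (2 / α) *
          (((F q : ℝ) - 1) + MI q ((P q * B q / (P t * B t))⁻¹ * SNR q * y)
            + TI q ((P q * B q / (P t * B t))⁻¹ * SNR q * y)))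
    (hZtpos : ∀ y, 0 < Zt y)
    (Gt : ℝ → ℝ → ℝ)
    (hGt : ∀ y lam, Gt y lam = (Zt y)⁻¹ - (α / 2) * (y / Zt y) *
        ∫ ξ in Set.Ioi (0 : ℝ),
          ξ ^ (α / 2 - 1) * Real.exp (-(π * (κ t * lam / (F t : ℝ)) * Zt y * ξ)) *
            Real.exp (-(y * ξ ^ (α / 2))))
    (R : ℝ → ℝ≥0∞)
    (hR : ∀ lam, R lam = ∫⁻ y in Set.Ioi (0 : ℝ),
        ENNReal.ofReal ((1 - Mt0 (SNR t * y)) * (Gt y lam / y))) :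
    (∀ lam₁ lam₂ : ℝ, 0 < lam₁ → lam₁ ≤ lam₂ → R lam₁ ≤ R lam₂)
    ∧ (∀ lam : ℝ, 0 < lam →
        R lam ≤ ∫⁻ y in Set.Ioi (0 : ℝ),
          ENNReal.ofReal ((1 - Mt0 (SNR t * y)) / (y * Zt y)))
    ∧ Tendsto R atTop
        (nhds (∫⁻ y in Set.Ioi (0 : ℝ),
          ENNReal.ofReal ((1 - Mt0 (SNR t * y)) / (y * Zt y)))) :=
  multi_tier_average_rate_dense_limit_general μ α hα T t P B κ F SNR hκ hF hSNR Xt g hXt hg hXtnn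
    Mt0 MI TI hMt0 hMI hTI Zt hZt hZtpos Gt hGt R hR
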